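/- arXiv:2006.13986 — 2 statements merged into one kernel-verified Lean document; each statement's English description precedes it below -/
import Mathlib

section
/- The Weyl algebra A₁ is rigid: its second Hochschild cohomology with coefficients in itself vanishes, HH²(A₁, A₁) = 0. Concretely, every bilinear map φ : A₁ × A₁ → A₁ satisfying a·φ(b,c) − φ(ab, c) + φ(a, bc) − φ(a,b)·c = 0 for all a,b,c is of the form φ(a,b) = a·ψ(b) − ψ(ab) + ψ(a)·b for some linear map ψ : A₁ → A₁. -/
/- STATEMENT 3: The Weyl algebra A₁ is rigid: HH²(A₁,A₁) = 0.  Every bilinear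
Hochschild 2-cocycle φ is a coboundary φ = ∂ψ. -/

/-- The first Weyl algebra: the free algebra on generators `q` (encoded `true`)
and `p` (encoded `false`) modulo the relation `q*p = p*q + 1`. -/
inductive WeylRel (k : Type*) [CommRing k] :
    FreeAlgebra k Bool → FreeAlgebra k Bool → Prop
  | qp : WeylRel k (FreeAlgebra.ι k true * FreeAlgebra.ι k false)
      (FreeAlgebra.ι k false * FreeAlgebra.ι k true + 1)

/-- The first Weyl algebra `A₁` over `k`. -/
abbrev Weyl (k : Type*) [CommRing k] := RingQuot (WeylRel k)

/-- the generator `q` of the Weyl algebra -/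
noncomputable def Wq (k : Type*) [CommRing k] : Weyl k :=
  RingQuot.mkRingHom (WeylRel k) (FreeAlgebra.ι k true)

/-- the generator `p` of the Weyl algebra -/
noncomputable def Wp (k : Type*) [CommRing k] : Weyl k :=
  RingQuot.mkRingHom (WeylRel k) (FreeAlgebra.ι k false)

/-!
A Hochschild 2-cocycle `φ` on `A` twists the multiplication of the square-zero extension
`A ⊕ Aε`, and `φ` is a coboundary as soon as the projection onto `A` has an algebra section.
For the Weyl algebra a section is given by lifts of `q` and `p` satisfying `qp = pq + 1`.
Lifting `q ↦ (q, 0)` and `p ↦ (p, u)` reduces that relation to the equation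
`[q, u] = φ(p, q) - φ(q, p) - φ(1, 1)`, which is solvable because `ad q` sends the normally ordered monomial `p^(i+1) q^j` to
`(i + 1) p^i q^j`, and `i + 1` is invertible in characteristic zero.
-/

lemma mul_pow_succ_of_mul_eq_mul_add_one {R : Type*} [Semiring R] {q p : R}
    (h : q * p = p * q + 1) (n : ℕ) : q * p ^ (n + 1) = p ^ (n + 1) * q + (n + 1) • p ^ n := by
  induction n with
  | zero => simpa using h
  | succ n ih =>
    rw [pow_succ p (n + 1), ← mul_assoc, ih, add_mul, mul_assoc, h, smul_mul_assoc,
      ← pow_succ, mul_add, mul_one, ← mul_assoc, ← pow_succ, succ_nsmul _ (n + 1)]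
    abel

lemma Submodule.span_eq_top_of_one_mem_of_mul_mem {k A : Type*} [CommSemiring k] [Semiring A]
    [Algebra k A] {s t : Set A} (hs : Algebra.adjoin k s = ⊤) (h1 : 1 ∈ span k t)
    (hmul : ∀ x ∈ s, ∀ m ∈ t, x * m ∈ span k t) : span k t = ⊤ := by
  suffices h : ∀ a : A, ∀ m ∈ span k t, a * m ∈ span k t from
    eq_top_iff.2 fun a _ => by simpa using h a 1 h1
  intro a
  induction (hs ▸ Algebra.mem_top : a ∈ Algebra.adjoin k s) using Algebra.adjoin_induction with
  | mem x hx =>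
    exact fun m hm => (span_le (p := (span k t).comap (LinearMap.mulLeft k x))).2 (hmul x hx) hm
  | algebraMap r => exact fun m hm => by simpa [Algebra.smul_def] using smul_mem _ r hm
  | add x y _ _ hx hy => exact fun m hm => by simpa [add_mul] using add_mem (hx m hm) (hy m hm)
  | mul x y _ _ hx hy => exact fun m hm => by simpa [mul_assoc] using hx _ (hy m hm)

structure HochschildCocycle (k A : Type*) [CommRing k] [Ring A] [Algebra k A] where
  bilin : A →ₗ[k] A →ₗ[k] A
  cocycle : ∀ a b c : A, a * bilin b c - bilin (a * b) c + bilin a (b * c) - bilin a b * c = 0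

namespace HochschildCocycle

variable {k A : Type*} [CommRing k] [Ring A] [Algebra k A] (c : HochschildCocycle k A)

lemma bilin_one_left (b : A) : c.bilin 1 b = c.bilin 1 1 * b := by
  have h := c.cocycle 1 1 b
  simp only [one_mul] at h
  rw [← sub_eq_zero, ← h]
  abel

lemma bilin_one_right (a : A) : c.bilin a 1 = a * c.bilin 1 1 := by
  have h := c.cocycle a 1 1
  simp only [mul_one] at h
  rw [eq_comm, ← sub_eq_zero, ← h]
  abel

/-- The extension `A ⊕ Aε`, `ε² = 0`, with multiplication twisted by `c`:
`(a, x) * (b, y) = (a * b, a * y + x * b + c a b)`. The cocycle identity is exactly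
associativity, and `(1, -c 1 1)` is the unit. -/
def Ext (_c : HochschildCocycle k A) : Type _ := A × A

instance : AddCommGroup c.Ext := inferInstanceAs (AddCommGroup (A × A))

instance : Module k c.Ext := inferInstanceAs (Module k (A × A))

instance : Ring c.Ext :=
  { (inferInstance : AddCommGroup c.Ext) with
    mul := fun x y => (x.1 * y.1, x.1 * y.2 + x.2 * y.1 + c.bilin x.1 y.1)
    one := ((1 : A), -c.bilin 1 1)
    mul_assoc := by
      rintro ⟨a, x⟩ ⟨b, y⟩ ⟨d, z⟩
      refine Prod.ext (mul_assoc a b d) ?_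
      show (a * b) * z + (a * y + x * b + c.bilin a b) * d + c.bilin (a * b) d
          = a * (b * z + y * d + c.bilin b d) + x * (b * d) + c.bilin a (b * d)
      simp only [mul_add, add_mul, mul_assoc]
      rw [← sub_eq_zero, ← neg_eq_zero, ← c.cocycle a b d]
      abel
    one_mul := by
      rintro ⟨b, y⟩
      refine Prod.ext (one_mul b) ?_
      show 1 * y + -c.bilin 1 1 * b + c.bilin 1 b = y
      rw [c.bilin_one_left b, one_mul, neg_mul]
      abel
    mul_one := by
      rintro ⟨a, x⟩
      refine Prod.ext (mul_one a) ?_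
      show a * -c.bilin 1 1 + x * 1 + c.bilin a 1 = x
      rw [c.bilin_one_right a, mul_one, mul_neg]
      abel
    left_distrib := by
      rintro ⟨a, x⟩ ⟨b, y⟩ ⟨d, z⟩
      refine Prod.ext (mul_add a b d) ?_
      show a * (y + z) + x * (b + d) + c.bilin a (b + d)
          = (a * y + x * b + c.bilin a b) + (a * z + x * d + c.bilin a d)
      simp only [map_add, mul_add]
      abel
    right_distrib := by
      rintro ⟨a, x⟩ ⟨b, y⟩ ⟨d, z⟩
      refine Prod.ext (add_mul a b d) ?_
      show (a + b) * z + (x + y) * d + c.bilin (a + b) d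
          = (a * z + x * d + c.bilin a d) + (b * z + y * d + c.bilin b d)
      simp only [map_add, LinearMap.add_apply, add_mul]
      abel
    zero_mul := fun ⟨a, _⟩ => Prod.ext (zero_mul a) <| by
      show 0 * _ + 0 * a + c.bilin 0 a = 0
      simp
    mul_zero := fun ⟨a, _⟩ => Prod.ext (mul_zero a) <| by
      show a * 0 + _ * 0 + c.bilin a 0 = 0
      simp }

lemma Ext.mul_def (x y : c.Ext) :
    x * y = (x.1 * y.1, x.1 * y.2 + x.2 * y.1 + c.bilin x.1 y.1) := rfl

instance : Algebra k c.Ext :=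
  Algebra.ofModule
    (fun r x y => Prod.ext (smul_mul_assoc r x.1 y.1) <| by
      show (r • x.1) * y.2 + (r • x.2) * y.1 + c.bilin (r • x.1) y.1
          = r • (x.1 * y.2 + x.2 * y.1 + c.bilin x.1 y.1)
      rw [map_smul, LinearMap.smul_apply, smul_mul_assoc, smul_mul_assoc, smul_add, smul_add])
    (fun r x y => Prod.ext (mul_smul_comm r x.1 y.1) <| by
      show x.1 * (r • y.2) + x.2 * (r • y.1) + c.bilin x.1 (r • y.1)
          = r • (x.1 * y.2 + x.2 * y.1 + c.bilin x.1 y.1)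
      rw [map_smul, mul_smul_comm, mul_smul_comm, smul_add, smul_add])

def Ext.fst : c.Ext →ₐ[k] A where
  toFun x := x.1
  map_one' := rfl
  map_mul' _ _ := rfl
  map_zero' := rfl
  map_add' _ _ := rfl
  commutes' r := by
    show (r • (1 : c.Ext)).1 = algebraMap k A r
    rw [Algebra.algebraMap_eq_smul_one]
    rfl

theorem exists_coboundary_of_section (s : A →ₐ[k] c.Ext) (hs : ∀ a, (s a).1 = a) :
    ∃ ψ : A →ₗ[k] A, ∀ a b : A, c.bilin a b = a * ψ b - ψ (a * b) + ψ a * b := by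
  refine ⟨-(LinearMap.snd k A A ∘ₗ s.toLinearMap), fun a b => ?_⟩
  have hmul : (s (a * b)).2 = a * (s b).2 + (s a).2 * b + c.bilin a b := by
    rw [map_mul, Ext.mul_def, hs a, hs b]
  show _ = a * -(s b).2 - -(s (a * b)).2 + -(s a).2 * b
  rw [hmul]
  noncomm_ring

end HochschildCocycle

namespace Weyl

section CommRing

variable {k : Type*} [CommRing k]

lemma q_mul_p : Wq k * Wp k = Wp k * Wq k + 1 := by
  simpa [Wq, Wp] using RingQuot.mkRingHom_rel (WeylRel.qp (k := k))

lemma mkAlgHom_ι_false : RingQuot.mkAlgHom k (WeylRel k) (FreeAlgebra.ι k false) = Wp k :=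
  congrArg (· (FreeAlgebra.ι k false)) (RingQuot.mkAlgHom_coe k (WeylRel k))

lemma mkAlgHom_ι_true : RingQuot.mkAlgHom k (WeylRel k) (FreeAlgebra.ι k true) = Wq k :=
  congrArg (· (FreeAlgebra.ι k true)) (RingQuot.mkAlgHom_coe k (WeylRel k))

lemma adjoin_p_q : Algebra.adjoin k {Wp k, Wq k} = ⊤ := by
  have h := congrArg (Subalgebra.map (RingQuot.mkAlgHom k (WeylRel k)))
    (FreeAlgebra.adjoin_range_ι k Bool)
  rw [← Algebra.adjoin_image, Algebra.map_top,
    (AlgHom.range_eq_top _).2 (RingQuot.mkAlgHom_surjective k _), ← Set.range_comp,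
    Bool.range_eq, Function.comp_apply, Function.comp_apply, mkAlgHom_ι_false,
    mkAlgHom_ι_true] at h
  exact h

variable {B : Type*} [Semiring B] [Algebra k B]

noncomputable def lift (Q P : B) (h : Q * P = P * Q + 1) : Weyl k →ₐ[k] B :=
  RingQuot.liftAlgHom k ⟨FreeAlgebra.lift k fun b => if b then Q else P, by
    rintro _ _ ⟨⟩
    simpa using h⟩

@[simp]
lemma lift_q (Q P : B) (h : Q * P = P * Q + 1) : lift Q P h (Wq k) = Q := by
  rw [← mkAlgHom_ι_true, lift, RingQuot.liftAlgHom_mkAlgHom_apply, FreeAlgebra.lift_ι_apply,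
    if_pos rfl]

@[simp]
lemma lift_p (Q P : B) (h : Q * P = P * Q + 1) : lift Q P h (Wp k) = P := by
  rw [← mkAlgHom_ι_false, lift, RingQuot.liftAlgHom_mkAlgHom_apply, FreeAlgebra.lift_ι_apply,
    if_neg Bool.false_ne_true]

lemma algHom_ext {f g : Weyl k →ₐ[k] B} (hp : f (Wp k) = g (Wp k)) (hq : f (Wq k) = g (Wq k)) :
    f = g :=
  AlgHom.ext_of_adjoin_eq_top adjoin_p_q <| by rintro _ (rfl | rfl) <;> assumption

lemma span_monomials_eq_top :
    Submodule.span k {x | ∃ i j : ℕ, x = Wp k ^ i * Wq k ^ j} = ⊤ := by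
  have mem (i j : ℕ) : Wp k ^ i * Wq k ^ j ∈
      Submodule.span k {x | ∃ i j : ℕ, x = Wp k ^ i * Wq k ^ j} :=
    Submodule.subset_span ⟨i, j, rfl⟩
  refine Submodule.span_eq_top_of_one_mem_of_mul_mem adjoin_p_q (by simpa using mem 0 0) ?_
  rintro x (rfl | rfl) _ ⟨i, j, rfl⟩
  · simpa [← mul_assoc, ← pow_succ'] using mem (i + 1) j
  · cases i with
    | zero => simpa [← pow_succ'] using mem 0 (j + 1)
    | succ n =>
      rw [← mul_assoc, mul_pow_succ_of_mul_eq_mul_add_one q_mul_p, add_mul, mul_assoc,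
        ← pow_succ', smul_mul_assoc]
      exact add_mem (mem _ _) (Submodule.smul_of_tower_mem _ _ (mem _ _))

end CommRing

section Field

variable {k : Type*} [Field k] [CharZero k]

theorem exists_q_mul_sub_mul_q (x : Weyl k) : ∃ u, Wq k * u - u * Wq k = x := by
  let adq : Weyl k →ₗ[k] Weyl k := LinearMap.mulLeft k (Wq k) - LinearMap.mulRight k (Wq k)
  suffices h : LinearMap.range adq = ⊤ from LinearMap.range_eq_top.1 h x
  rw [eq_top_iff, ← span_monomials_eq_top, Submodule.span_le]
  rintro _ ⟨i, j, rfl⟩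
  have hi : ((i + 1 : ℕ) : k) ≠ 0 := Nat.cast_ne_zero.2 i.succ_ne_zero
  refine ⟨((i + 1 : ℕ) : k)⁻¹ • (Wp k ^ (i + 1) * Wq k ^ j), ?_⟩
  have hadq : adq (Wp k ^ (i + 1) * Wq k ^ j) = (i + 1) • (Wp k ^ i * Wq k ^ j) := by
    simp only [adq, LinearMap.sub_apply, LinearMap.mulLeft_apply, LinearMap.mulRight_apply]
    rw [← mul_assoc, mul_pow_succ_of_mul_eq_mul_add_one q_mul_p, add_mul, smul_mul_assoc,
      mul_assoc, mul_assoc, ← pow_succ, ← pow_succ']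
    abel
  rw [map_smul, hadq, ← Nat.cast_smul_eq_nsmul k, smul_smul, inv_mul_cancel₀ hi, one_smul]

theorem exists_section (c : HochschildCocycle k (Weyl k)) :
    ∃ s : Weyl k →ₐ[k] c.Ext, ∀ a, (s a).1 = a := by
  obtain ⟨u, hu⟩ := exists_q_mul_sub_mul_q
    (c.bilin (Wp k) (Wq k) - c.bilin (Wq k) (Wp k) - c.bilin 1 1)
  let Q : c.Ext := (Wq k, 0)
  let P : c.Ext := (Wp k, u)
  have hrel : Q * P = P * Q + 1 := by
    refine Prod.ext q_mul_p ?_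
    show Wq k * u + 0 * Wp k + c.bilin (Wq k) (Wp k)
      = Wp k * 0 + u * Wq k + c.bilin (Wp k) (Wq k) + -c.bilin 1 1
    rw [sub_eq_iff_eq_add'.1 hu, zero_mul, mul_zero]
    abel
  have hfst : (HochschildCocycle.Ext.fst c).comp (lift _ _ hrel) = AlgHom.id k (Weyl k) :=
    algHom_ext (by rw [AlgHom.comp_apply, lift_p]; rfl) (by rw [AlgHom.comp_apply, lift_q]; rfl)
  exact ⟨lift _ _ hrel, AlgHom.congr_fun hfst⟩

end Field

end Weyl

theorem weyl_HH2_trivial (k : Type*) [Field k] [CharZero k]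
    (φ : Weyl k →ₗ[k] Weyl k →ₗ[k] Weyl k)
    (hcocycle : ∀ a b c : Weyl k,
      a * φ b c - φ (a * b) c + φ a (b * c) - φ a b * c = 0) :
    ∃ ψ : Weyl k →ₗ[k] Weyl k,
      ∀ a b : Weyl k, φ a b = a * ψ b - ψ (a * b) + ψ a * b := by
  let c : HochschildCocycle k (Weyl k) := ⟨φ, hcocycle⟩
  obtain ⟨s, hs⟩ := Weyl.exists_section c
  exact c.exists_coboundary_of_section s hs
end

section
/- The bilinear form B(a,b) = Str(a ⋆ b) on the Weyl algebra A₁, where Str is the supertrace (evaluation of the Weyl symbol at 0), is nondegenerate. -/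
/- STATEMENT 5: The bilinear form B(a,b) = Str(a ⋆ b) on the Weyl algebra A₁
realized as polynomials in y₁,y₂ with the Weyl–Moyal star product, where
Str f = f(0,0) is the supertrace (evaluation of the Weyl symbol at 0), is
nondegenerate: if Str(a ⋆ b) = 0 for all b then a = 0. -/

open MvPolynomial

noncomputable section

abbrev P2 := MvPolynomial (Fin 2) ℂ
abbrev P4 := MvPolynomial (Fin 4) ℂ

/-- embed the first factor: variables `y₁` ↦ variables 0,1 -/
def emb1 : Fin 2 → Fin 4 := fun i => Fin.castLE (by omega) i

/-- embed the second factor: variables `y₂` ↦ variables 2,3 -/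
def emb2 : Fin 2 → Fin 4 := fun i => i.addNat 2

/-- identify both groups of variables with `y` (evaluation at `y₁ = y₂ = 0`
after the shift by `y`). -/
def collapse : Fin 4 → Fin 2 := ![0, 1, 0, 1]

/-- the symplectic bidifferential `−∂_{y₁}ᵅ ε_{αβ} ∂_{y₂}ᵝ
  = ∂_{1,2}∂_{2,1} − ∂_{1,1}∂_{2,2}` acting on the doubled variables. -/
def moyalOp : P4 →ₗ[ℂ] P4 :=
  (pderiv (1 : Fin 4) :
      Derivation ℂ P4 P4).toLinearMap ∘ₗ (pderiv (2 : Fin 4) :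
      Derivation ℂ P4 P4).toLinearMap
    - (pderiv (0 : Fin 4) :
      Derivation ℂ P4 P4).toLinearMap ∘ₗ (pderiv (3 : Fin 4) :
      Derivation ℂ P4 P4).toLinearMap

/-- the Weyl–Moyal star product: `exp[p₁·p₂] f(y+y₁)g(y+y₂)|_{y₁=y₂=0}`.
The exponential series is finite on polynomials; all terms beyond
`totalDegree f + totalDegree g` vanish. -/
def moyalStar (f g : P2) : P2 :=
  ∑ n ∈ Finset.range (f.totalDegree + g.totalDegree + 1),
    ((n.factorial : ℂ))⁻¹ •
      rename collapse ((moyalOp ^ n) (rename emb1 f * rename emb2 g))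

/-- the supertrace: evaluation of the Weyl symbol at the origin. -/
def StrM (f : P2) : ℂ := constantCoeff f

/- The Moyal operator `∂₁∂₂ - ∂₀∂₃` is the difference of two commuting operators, each acting
factorwise on `a(y₀, y₁) b(y₂, y₃)`, so by the binomial theorem the constant term of its `k`-th
power is a signed sum of products `(∂ᵘa)(0) (∂ᵛb)(0)`, i.e. of products of coefficients of `a`
and `b`. Against the monomial `b = y₀ᵐ y₁ⁿ` only the term `k = m + n` survives, and
`Str (a ⋆ y₀ᵐ y₁ⁿ) = (-1)ⁿ m! n! · [y₀ⁿ y₁ᵐ] a`, so every coefficient of `a` is detected. -/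

open Finsupp (single)

namespace MvPolynomial

variable {R σ τ : Type*} [CommSemiring R]

theorem pderiv_rename_of_notMem_range {e : σ → τ} {j : τ} (hj : j ∉ Set.range e)
    (p : MvPolynomial σ R) : pderiv j (rename e p) = 0 := by
  classical
  refine pderiv_eq_zero_of_notMem_vars fun hmem => hj ?_
  obtain ⟨i, -, rfl⟩ := Finset.mem_image.1 (vars_rename e p hmem)
  exact ⟨i, rfl⟩

theorem pderiv_comm (i j : σ) (p : MvPolynomial σ R) :
    pderiv i (pderiv j p) = pderiv j (pderiv i p) := by
  classical
  obtain rfl | hij := eq_or_ne i j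
  · rfl
  ext m
  simp only [coeff_pderiv, Finsupp.add_apply, Finsupp.single_eq_of_ne hij,
    Finsupp.single_eq_of_ne hij.symm, add_zero, add_right_comm m]
  ring

theorem commute_pderiv (i j : σ) :
    Commute (pderiv (R := R) i : Module.End R (MvPolynomial σ R)) (pderiv (R := R) j) :=
  LinearMap.ext fun p => pderiv_comm i j p

theorem coeff_pderiv_pow (i : σ) (k : ℕ) (p : MvPolynomial σ R) (m : σ →₀ ℕ) :
    coeff m (((pderiv (R := R) i : Module.End R (MvPolynomial σ R)) ^ k) p) =
      coeff (m + single i k) p * (m i + k).descFactorial k := by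
  induction k generalizing m with
  | zero => simp
  | succ k ih =>
    have hk : m i + (k + 1) - k = m i + 1 := by omega
    rw [pow_succ', Module.End.mul_apply, Derivation.coeFn_coe, coeff_pderiv, ih,
      Nat.descFactorial_succ, hk, add_assoc, ← Finsupp.single_add, Finsupp.add_apply,
      Finsupp.single_eq_same, add_assoc, add_comm 1 k]
    push_cast
    ring

theorem constantCoeff_pderiv_pow_pderiv_pow {u v : σ} (huv : u ≠ v) (s t : ℕ)
    (p : MvPolynomial σ R) :
    constantCoeff (((pderiv (R := R) u : Module.End R (MvPolynomial σ R)) ^ s)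
        (((pderiv (R := R) v : Module.End R (MvPolynomial σ R)) ^ t) p)) =
      (s.factorial * t.factorial : ℕ) * coeff (single u s + single v t) p := by
  rw [constantCoeff_eq, coeff_pderiv_pow, coeff_pderiv_pow]
  simp only [zero_add, Finsupp.coe_zero, Pi.zero_apply, Finsupp.single_eq_of_ne huv.symm,
    Nat.descFactorial_self, Nat.cast_mul]
  ring

end MvPolynomial

def extMul (f g : P2) : P4 := rename emb1 f * rename emb2 g

def crossPderiv (i j : Fin 2) : Module.End ℂ P4 :=
  (pderiv (R := ℂ) (emb1 i) : Module.End ℂ P4) * pderiv (R := ℂ) (emb2 j)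

lemma emb1_injective : Function.Injective emb1 := by decide

lemma emb2_injective : Function.Injective emb2 := by decide

lemma emb1_notMem_range_emb2 (i : Fin 2) : emb1 i ∉ Set.range emb2 := by
  rintro ⟨j, hj⟩
  revert i j
  decide

lemma emb2_notMem_range_emb1 (j : Fin 2) : emb2 j ∉ Set.range emb1 := by
  rintro ⟨i, hi⟩
  revert i j
  decide

lemma constantCoeff_extMul (f g : P2) :
    constantCoeff (extMul f g) = constantCoeff f * constantCoeff g := by
  rw [extMul, map_mul, constantCoeff_rename, constantCoeff_rename]

lemma crossPderiv_extMul (i j : Fin 2) (f g : P2) :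
    crossPderiv i j (extMul f g) = extMul (pderiv i f) (pderiv j g) := by
  simp only [crossPderiv, extMul, Module.End.mul_apply, Derivation.coeFn_coe, pderiv_mul,
    pderiv_rename_of_notMem_range (emb2_notMem_range_emb1 j),
    pderiv_rename_of_notMem_range (emb1_notMem_range_emb2 i),
    pderiv_rename emb1_injective, pderiv_rename emb2_injective, zero_mul, mul_zero, add_zero,
    zero_add]

local notation "∂" i:max => (pderiv (R := ℂ) (i : Fin 2) : Module.End ℂ P2)

lemma crossPderiv_pow_extMul (i j : Fin 2) (k : ℕ) (f g : P2) :
    (crossPderiv i j ^ k) (extMul f g) =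
      extMul ((∂ i ^ k) f) ((∂ j ^ k) g) := by
  induction k generalizing f g with
  | zero => rfl
  | succ k ih => rw [pow_succ, Module.End.mul_apply, crossPderiv_extMul, ih]; rfl

lemma commute_crossPderiv (i j i' j' : Fin 2) : Commute (crossPderiv i j) (crossPderiv i' j') :=
  ((commute_pderiv _ _).mul_left (commute_pderiv _ _)).mul_right
    ((commute_pderiv _ _).mul_left (commute_pderiv _ _))

lemma moyalOp_eq_sub : moyalOp = crossPderiv 1 0 - crossPderiv 0 1 := rfl

open Finset

lemma moyalOp_pow_extMul (k : ℕ) (f g : P2) :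
    (moyalOp ^ k) (extMul f g) = ∑ p ∈ antidiagonal k,
      ((k.choose p.1 : ℂ) * (-1) ^ p.2) •
        extMul ((∂ 1 ^ p.1) ((∂ 0 ^ p.2) f)) ((∂ 0 ^ p.1) ((∂ 1 ^ p.2) g)) := by
  rw [moyalOp_eq_sub, sub_eq_add_neg, ((commute_crossPderiv 1 0 0 1).neg_right).add_pow',
    LinearMap.coe_sum, Finset.sum_apply]
  refine Finset.sum_congr rfl fun p _ => ?_
  rw [← neg_one_smul ℂ (crossPderiv 0 1), smul_pow]
  simp only [LinearMap.smul_apply, Module.End.mul_apply, map_smul, crossPderiv_pow_extMul,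
    mul_smul, Nat.cast_smul_eq_nsmul]

lemma constantCoeff_moyalOp_pow_extMul (k : ℕ) (f g : P2) :
    constantCoeff ((moyalOp ^ k) (extMul f g)) = ∑ p ∈ antidiagonal k,
      (k.choose p.1 : ℂ) * (-1) ^ p.2 * ((p.1.factorial * p.2.factorial : ℕ) : ℂ) ^ 2 *
        coeff (single 1 p.1 + single 0 p.2) f * coeff (single 0 p.1 + single 1 p.2) g := by
  rw [moyalOp_pow_extMul, map_sum]
  refine Finset.sum_congr rfl fun p _ => ?_
  rw [constantCoeff_smul, constantCoeff_extMul, constantCoeff_pderiv_pow_pderiv_pow (by decide),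
    constantCoeff_pderiv_pow_pderiv_pow (by decide), smul_eq_mul]
  ring

lemma strM_moyalStar (a b : P2) :
    StrM (moyalStar a b) = ∑ k ∈ range (a.totalDegree + b.totalDegree + 1),
      (k.factorial : ℂ)⁻¹ * constantCoeff ((moyalOp ^ k) (extMul a b)) := by
  simp only [StrM, moyalStar, map_sum, constantCoeff_smul, constantCoeff_rename, smul_eq_mul,
    extMul]

lemma strM_moyalStar_monomial (a : P2) (m n : ℕ) :
    StrM (moyalStar a (monomial (single 0 m + single 1 n) 1)) =
      (-1) ^ n * m.factorial * n.factorial * coeff (single 1 m + single 0 n) a := by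
  set b : P2 := monomial (single 0 m + single 1 n) 1
  have hb (p : ℕ × ℕ) :
      coeff (single 0 p.1 + single 1 p.2) b = if (m, n) = p then 1 else 0 := by
    rw [coeff_monomial]
    congr 1
    simp [Finsupp.ext_iff, Fin.forall_fin_two, Prod.ext_iff]
  have hdeg : b.totalDegree = m + n := by
    rw [totalDegree_monomial _ one_ne_zero]
    simp [Finsupp.sum_add_index', Finsupp.sum_single_index]
  have hfac : ((m + n).choose m * m.factorial * n.factorial : ℂ) = (m + n).factorial := by
    exact_mod_cast (by simpa using Nat.choose_mul_factorial_mul_factorial (Nat.le_add_right m n))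
  simp only [strM_moyalStar, constantCoeff_moyalOp_pow_extMul, hb, mul_ite, mul_zero, mul_one,
    Finset.sum_ite_eq, HasAntidiagonal.mem_antidiagonal]
  rw [if_pos (by rw [mem_range, hdeg]; omega),
    inv_mul_eq_iff_eq_mul₀ (Nat.cast_ne_zero.2 (Nat.factorial_ne_zero _)), ← hfac]
  push_cast
  ring

/-- Nondegeneracy of the pairing `(a,b) ↦ Str (a ⋆ b)`. -/
theorem moyal_supertrace_pairing_nondegenerate (a : P2)
    (h : ∀ b : P2, StrM (moyalStar a b) = 0) : a = 0 := by
  ext d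
  have hd : d = single 1 (d 1) + single 0 (d 0) := by
    ext k
    fin_cases k <;> simp
  have hpair := h (monomial (single 0 (d 1) + single 1 (d 0)) 1)
  rw [strM_moyalStar_monomial, ← hd] at hpair
  simpa [Nat.factorial_ne_zero] using hpair

end
end
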